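/- arXiv:1507.03520 — 5 statements merged into one kernel-verified Lean document; each statement's English description precedes it below -/
import Mathlib

section
/- If n is odd and the pattern (m_1,...,m_T) has the form (2^k s_1, ..., 2^k s_T) where k ≥ 1, each s_i is a positive integer, every m_i is even, k is the largest power of 2 dividing all m_i, and s_1 + s_2 + ... + s_T is odd, then (m_1,...,m_T) is NOT in the Borda range for n voters. -/
/-- The Borda score of alternative `x` under profile `u`, where each voter's
strict linear order is encoded as a ranking bijection (`u i x = k` means `x`
is in position `k+1`, top = position 1). -/
def bordaScore {m n : ℕ} (u : Fin n → (Fin m ≃ Fin m)) (x : Fin m) : ℕ :=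
  ∑ i, ((u i x : ℕ) + 1)

/-- The pattern `p = [m₁, ..., m_T]` is in the Borda range for `n` voters:
some `n`-voter profile of strict linear orders on `p.sum` alternatives has
Borda-score equivalence classes of exactly these cardinalities, ordered by
increasing score. -/
def InBordaRange (n : ℕ) (p : List ℕ) : Prop :=
  ∃ u : Fin n → (Fin p.sum ≃ Fin p.sum), ∃ scores : Fin p.length → ℕ,
    StrictMono scores ∧
    (∀ x, ∃ j, bordaScore u x = scores j) ∧
    ∀ j : Fin p.length,
      (Finset.univ.filter (fun x => bordaScore u x = scores j)).card = p.get j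

/-!
Summing the Borda scores voter by voter gives `n · m(m+1)/2`; summing them class by class gives
`∑ scoreⱼ · mⱼ`, which is divisible by `2^k`. Hence `2^(k+1) ∣ n · 2^k s · (2^k s + 1)` with
`s = s₁ + ⋯ + s_T`, which is impossible when `n` and `s` are odd.
-/

open Finset

theorem two_mul_sum_bordaScore {m n : ℕ} (u : Fin n → (Fin m ≃ Fin m)) :
    2 * ∑ x, bordaScore u x = n * (m * (m + 1)) := by
  have hvoter : ∑ x, bordaScore u x = n * ∑ x : Fin m, ((x : ℕ) + 1) := by
    simp only [bordaScore]
    rw [sum_comm]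
    simp only [Equiv.sum_comp (u _) (fun y : Fin m => (y : ℕ) + 1), sum_const, card_univ,
      Fintype.card_fin, smul_eq_mul]
  have hgauss : 2 * ∑ x : Fin m, ((x : ℕ) + 1) = m * (m + 1) := by
    have h := sum_range_id_mul_two (m + 1)
    rw [sum_range_succ', ← Fin.sum_univ_eq_sum_range (· + 1)] at h
    simpa [mul_comm] using h
  rw [hvoter, mul_left_comm, hgauss]

theorem dvd_sum_of_dvd_card_fiber {α : Type*} [Fintype α] (f : α → ℕ) (d : ℕ)
    (h : ∀ x, d ∣ #{y | f y = f x}) : d ∣ ∑ x, f x := by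
  rw [show ∑ x, f x = ∑ x, id (f x) from rfl, sum_comp id f]
  refine dvd_sum fun b hb => ?_
  obtain ⟨x, -, rfl⟩ := mem_image.mp hb
  exact (h x).mul_right _

theorem InBordaRange.two_mul_dvd {n d : ℕ} {p : List ℕ} (hp : InBordaRange n p)
    (hd : ∀ mi ∈ p, d ∣ mi) : 2 * d ∣ n * (p.sum * (p.sum + 1)) := by
  obtain ⟨u, scores, -, hcover, hcard⟩ := hp
  rw [← two_mul_sum_bordaScore u]
  refine mul_dvd_mul_left 2 (dvd_sum_of_dvd_card_fiber _ d fun x => ?_)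
  obtain ⟨j, hj⟩ := hcover x
  rw [hj, hcard j]
  exact hd _ (p.get_mem j)

theorem not_two_mul_two_pow_dvd {n k s : ℕ} (hn : Odd n) (hk : 1 ≤ k) (hs : Odd s) :
    ¬ 2 * 2 ^ k ∣ n * (2 ^ k * s * (2 ^ k * s + 1)) := by
  have hsucc : Odd (2 ^ k * s + 1) :=
    ((Nat.even_pow.mpr ⟨even_two, by omega⟩).mul_right s).add_one
  rw [show n * (2 ^ k * s * (2 ^ k * s + 1)) = 2 ^ k * (n * (s * (2 ^ k * s + 1))) by ring,
    mul_comm 2, Nat.mul_dvd_mul_iff_left (by positivity), ← even_iff_two_dvd, Nat.not_even_iff_odd]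
  exact hn.mul (hs.mul hsucc)

theorem stmt7_general (n : ℕ) (hn : Odd n) (k : ℕ) (hk : 1 ≤ k) (s : List ℕ)
    (hsum : Odd s.sum) :
    ¬ InBordaRange n (s.map (fun si => 2 ^ k * si)) := by
  intro hrange
  have hdvd : ∀ mi ∈ s.map (fun si => 2 ^ k * si), 2 ^ k ∣ mi := by
    simp only [List.mem_map]
    rintro _ ⟨si, -, rfl⟩
    exact dvd_mul_right _ _
  have htotal : (s.map (fun si => 2 ^ k * si)).sum = 2 ^ k * s.sum := by
    simpa using List.sum_map_mul_left s id (2 ^ k)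
  have h := hrange.two_mul_dvd hdvd
  rw [htotal] at h
  exact not_two_mul_two_pow_dvd hn hk hsum h

theorem stmt7 (n : ℕ) (hn : Odd n) (k : ℕ) (hk : 1 ≤ k) (s : List ℕ)
    (hpos : ∀ si ∈ s, 0 < si)
    (hmax : ∃ si ∈ s, Odd si)
    (hsum : Odd s.sum) :
    ¬ InBordaRange n (s.map (fun si => 2 ^ k * si)) :=
  stmt7_general n hn k hk s hsum
end

section
/- Let n ≥ 3 be odd and let (m_1, m_2) = (2s_1, 2s_2) where s_1 and s_2 are both odd positive integers. Then there exists an n-voter profile of strict linear orders on a set of 2s_1 + 2s_2 alternatives whose Borda ranking has exactly two levels with cardinalities m_1 and m_2. -/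
/-!
Appending a voter together with the reversed ranking raises every Borda score by `m + 1`, so it
suffices to treat three voters. Since each voter ranks by a permutation, the scores add up to
`n * m * (m + 1) / 2`; so if every score is `w` or `w + δ`, the size of the upper level is forced
by `w` and `δ`. On `4 * d` alternatives, `d = (s₁ + s₂) / 2`, `c = (s₁ + 1) / 2`, the three
rankings `x`, `secondRank d x`, `thirdRank c d x` have rank sums `c + 5 * d - 2` or
`c + 6 * d - 2`: the third ranking is the reflection `c + 6 * d - 2 - (x + secondRank d x)`,
lowered by `d` on a set of values chosen so that it is still a permutation.
-/

open Finset

namespace Borda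

variable {m n : ℕ}

def appendReversalPair (u : Fin n → Equiv.Perm (Fin m)) : Fin (n + 2) → Equiv.Perm (Fin m) :=
  Fin.snoc (α := fun _ => Equiv.Perm (Fin m)) (Fin.snoc (α := fun _ => Equiv.Perm (Fin m)) u
    (Equiv.refl _)) Fin.revPerm

theorem bordaScore_appendReversalPair (u : Fin n → Equiv.Perm (Fin m)) (x : Fin m) :
    bordaScore (appendReversalPair u) x = bordaScore u x + (m + 1) := by
  have hx := x.isLt
  simp only [bordaScore, appendReversalPair, Fin.sum_univ_castSucc, Fin.snoc_castSucc,
    Fin.snoc_last, Equiv.refl_apply, Fin.revPerm_apply, Fin.val_rev]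
  omega

theorem sum_bordaScore_mul_two (u : Fin n → Equiv.Perm (Fin m)) :
    (∑ x, bordaScore u x) * 2 = n * (m * (m + 1)) := by
  have hperm : ∀ i, ∑ x, ((u i x : ℕ) + 1) = ∑ x : Fin m, ((x : ℕ) + 1) :=
    fun i => Equiv.sum_comp (u i) (fun y : Fin m => (y : ℕ) + 1)
  have hgauss : (∑ x : Fin m, ((x : ℕ) + 1)) * 2 = m * (m + 1) := by
    rw [Fin.sum_univ_eq_sum_range (fun k => k + 1), ← add_zero (∑ k ∈ range m, (k + 1)),
      ← Finset.sum_range_succ' (fun k => k), Finset.sum_range_id_mul_two, Nat.add_sub_cancel,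
      mul_comm]
  simp only [bordaScore]
  rw [Finset.sum_comm, Finset.sum_congr rfl fun i _ => hperm i, Finset.sum_const,
    Finset.card_univ, Fintype.card_fin, smul_eq_mul, mul_assoc, hgauss]

theorem InBordaRange.add_two {p : List ℕ} (h : InBordaRange n p) : InBordaRange (n + 2) p := by
  obtain ⟨u, scores, hmono, hcover, hcard⟩ := h
  refine ⟨appendReversalPair u, fun j => scores j + (p.sum + 1), hmono.add_const _, ?_, ?_⟩
  · intro x
    obtain ⟨j, hj⟩ := hcover x
    exact ⟨j, by rw [bordaScore_appendReversalPair, hj]⟩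
  · intro j
    simpa only [bordaScore_appendReversalPair, Nat.add_right_cancel_iff] using hcard j

theorem InBordaRange.add_mul_two {p : List ℕ} (h : InBordaRange n p) (k : ℕ) :
    InBordaRange (n + 2 * k) p := by
  induction k with
  | zero => exact h
  | succ k ih => exact InBordaRange.add_two ih

theorem inBordaRange_pair_of_two_levels {a b w δ : ℕ} (u : Fin n → Equiv.Perm (Fin m))
    (hm : a + b = m) (hδ : 0 < δ)
    (hlevels : ∀ x, bordaScore u x = w ∨ bordaScore u x = w + δ)
    (htotal : ∑ x, bordaScore u x = m * w + b * δ) : InBordaRange n [a, b] := by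
  subst hm
  set lower := univ.filter fun x => bordaScore u x = w
  set upper := univ.filter fun x => bordaScore u x = w + δ
  have hupper : univ.filter (fun x => ¬ bordaScore u x = w) = upper :=
    Finset.filter_congr fun x _ => by rcases hlevels x with h | h <;> rw [h] <;> omega
  have hcard : #lower + #upper = a + b := by
    rw [← hupper, Finset.card_filter_add_card_filter_not, card_univ, Fintype.card_fin]
  have hsum : ∑ x, bordaScore u x = #lower * w + #upper * (w + δ) := by
    rw [← Finset.sum_filter_add_sum_filter_not univ (fun x => bordaScore u x = w), hupper,
      Finset.sum_congr rfl fun x hx => (Finset.mem_filter.mp hx).2,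
      Finset.sum_congr rfl fun x hx => (Finset.mem_filter.mp hx).2]
    simp only [Finset.sum_const, smul_eq_mul]
    rfl
  have hb : #upper = b := by
    have : #upper * δ = b * δ := by nlinarith
    exact Nat.eq_of_mul_eq_mul_right hδ this
  refine ⟨u, ![w, w + δ], ?_, fun x => ?_, fun j => ?_⟩
  · exact fun i j hij => by fin_cases i <;> fin_cases j <;> simp_all
  · rcases hlevels x with h | h
    exacts [⟨0, h⟩, ⟨1, h⟩]
  · fin_cases j
    · change #lower = a; omega
    · exact hb

noncomputable def permOfInjOn (f : ℕ → ℕ) (hmaps : Set.MapsTo f (Set.Iio m) (Set.Iio m))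
    (hinj : Set.InjOn f (Set.Iio m)) : Equiv.Perm (Fin m) :=
  Equiv.ofBijective (fun x => ⟨f x, hmaps x.isLt⟩) <| Finite.injective_iff_bijective.mp
    fun x y hxy => Fin.ext <| hinj x.isLt y.isLt (congrArg Fin.val hxy)

@[simp]
theorem permOfInjOn_apply_val (f : ℕ → ℕ) (hmaps : Set.MapsTo f (Set.Iio m) (Set.Iio m))
    (hinj : Set.InjOn f (Set.Iio m)) (x : Fin m) : (permOfInjOn f hmaps hinj x : ℕ) = f x :=
  rfl

variable {c d v x : ℕ}

/-- On `x < 4 * d - 1` the sum `x + secondRank d x` runs once through `[2 * d, 6 * d - 2]`. -/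
def secondRank (d x : ℕ) : ℕ :=
  if x < 2 * d then x + 2 * d else if x < 4 * d - 1 then x + 1 - 2 * d else 0

theorem secondRank_mapsTo : Set.MapsTo (secondRank d) (Set.Iio (4 * d)) (Set.Iio (4 * d)) := by
  intro x hx
  simp only [Set.mem_Iio, secondRank] at *
  split_ifs <;> omega

theorem secondRank_injOn : Set.InjOn (secondRank d) (Set.Iio (4 * d)) := by
  intro x hx y hy hxy
  simp only [Set.mem_Iio, secondRank] at *
  split_ifs at hxy <;> omega

theorem add_secondRank_injOn : Set.InjOn (fun x => x + secondRank d x) (Set.Iio (4 * d - 1)) := by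
  intro x hx y hy hxy
  simp only [Set.mem_Iio, secondRank] at *
  split_ifs at hxy <;> omega

theorem add_secondRank_le (hx : x < 4 * d) : x + secondRank d x + 2 ≤ 6 * d := by
  unfold secondRank
  split_ifs <;> omega

theorem le_add_secondRank (hx : x < 4 * d - 1) : 2 * d ≤ x + secondRank d x := by
  unfold secondRank
  split_ifs <;> omega

def IsShifted (c d v : ℕ) : Prop := v % d + 1 < c ∨ v = c + d - 1

instance : DecidablePred (IsShifted c d) := fun _ => inferInstanceAs (Decidable (_ ∨ _))

/-- On `[c, c + 4 * d - 2]`, `shiftDown c d` is injective with image `[0, 4 * d)` minus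
`c + d - 1`: lowering by `d` the values with residue below `c - 1` fills everything but `c - 1`,
which is then taken by `c + d - 1`. -/
def shiftDown (c d v : ℕ) : ℕ := if IsShifted c d v then v - d else v

theorem le_of_isShifted (hc : 1 ≤ c) (hv : c ≤ v) (h : IsShifted c d v) : d ≤ v := by
  by_contra! hlt
  rcases h with h | h
  · rw [Nat.mod_eq_of_lt hlt] at h; omega
  · omega

theorem isShifted_of_isShifted_add (hc : 1 ≤ c) (hv : c ≤ v) (h : IsShifted c d (v + d)) :
    IsShifted c d v := by
  rcases h with h | h
  · exact Or.inl (by rwa [Nat.add_mod_right] at h)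
  · omega

theorem shiftDown_lt (hcd : c ≤ d) (hv : v + 2 ≤ c + 4 * d) : shiftDown c d v < 4 * d := by
  unfold shiftDown
  split_ifs with h
  · omega
  · by_contra! hge
    obtain ⟨t, rfl⟩ : ∃ t, v = t + d * 4 := ⟨v - 4 * d, by omega⟩
    refine h (Or.inl ?_)
    rw [Nat.add_mul_mod_self_left, Nat.mod_eq_of_lt (by omega)]
    omega

theorem shiftDown_ne (hc : 1 ≤ c) (hcd : c ≤ d) (hv : c ≤ v) :
    shiftDown c d v ≠ c + d - 1 := by
  unfold shiftDown
  split_ifs with h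
  · intro heq
    have hd := le_of_isShifted hc hv h
    obtain rfl : v = (c - 1) + d * 2 := by omega
    rcases h with h | h
    · rw [Nat.add_mul_mod_self_left, Nat.mod_eq_of_lt (by omega)] at h; omega
    · omega
  · exact fun heq => h (Or.inr heq)

theorem shiftDown_injOn (hc : 1 ≤ c) : Set.InjOn (shiftDown c d) (Set.Ici c) := by
  have key : ∀ v w, c ≤ v → c ≤ w →
      IsShifted c d v → ¬ IsShifted c d w → v - d ≠ w := by
    intro v w hv hw hsv hsw heq
    obtain rfl : v = w + d := by have := le_of_isShifted hc hv hsv; omega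
    exact hsw (isShifted_of_isShifted_add hc hw hsv)
  intro v hv w hw hvw
  simp only [Set.mem_Ici, shiftDown] at hv hw hvw
  split_ifs at hvw with hsv hsw hsw
  · have := le_of_isShifted hc hv hsv
    have := le_of_isShifted hc hw hsw
    omega
  · exact absurd hvw (key v w hv hw hsv hsw)
  · exact absurd hvw.symm (key w v hw hv hsw hsv)
  · exact hvw

theorem shiftDown_add_mem (hc : 1 ≤ c) (hv : c ≤ v) :
    shiftDown c d v + d = v ∨ shiftDown c d v = v := by
  unfold shiftDown
  split_ifs with h
  · exact Or.inl (Nat.sub_add_cancel (le_of_isShifted hc hv h))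
  · exact Or.inr rfl

/-- The value `4 * d - 1` of `x + secondRank d x` is taken twice, at `x = 3 * d - 1` and at
`x = 4 * d - 1`; the second of these is ranked at the one place `c + d - 1` that `shiftDown`
leaves free. -/
def thirdRank (c d x : ℕ) : ℕ :=
  if x = 4 * d - 1 then c + d - 1 else shiftDown c d (c + 6 * d - 2 - (x + secondRank d x))

theorem thirdRank_mapsTo (hc : 1 ≤ c) (hcd : c ≤ d) :
    Set.MapsTo (thirdRank c d) (Set.Iio (4 * d)) (Set.Iio (4 * d)) := by
  intro x hx
  rw [Set.mem_Iio] at hx ⊢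
  unfold thirdRank
  split_ifs with hlast
  · omega
  · have := le_add_secondRank (d := d) (by omega : x < 4 * d - 1)
    exact shiftDown_lt hcd (by omega)

theorem thirdRank_injOn (hc : 1 ≤ c) (hcd : c ≤ d) :
    Set.InjOn (thirdRank c d) (Set.Iio (4 * d)) := by
  intro x hx y hy hxy
  rw [Set.mem_Iio] at hx hy
  have hxg := add_secondRank_le (d := d) hx
  have hyg := add_secondRank_le (d := d) hy
  unfold thirdRank at hxy
  split_ifs at hxy with hxlast hylast hylast
  · omega
  · exact absurd hxy.symm (shiftDown_ne hc hcd (by omega))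
  · exact absurd hxy (shiftDown_ne hc hcd (by omega))
  · have hsum := shiftDown_injOn hc (Set.mem_Ici.mpr (by omega)) (Set.mem_Ici.mpr (by omega)) hxy
    exact add_secondRank_injOn (d := d) (Set.mem_Iio.mpr (by omega)) (Set.mem_Iio.mpr (by omega))
      (by simp only; omega)

theorem add_secondRank_add_thirdRank (hc : 1 ≤ c) (hcd : c ≤ d) (hx : x < 4 * d) :
    x + secondRank d x + thirdRank c d x = c + 5 * d - 2 ∨
      x + secondRank d x + thirdRank c d x = c + 6 * d - 2 := by
  have hxg := add_secondRank_le (d := d) hx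
  unfold thirdRank
  split_ifs with hlast
  · left
    simp only [secondRank, hlast]
    split_ifs <;> omega
  · rcases shiftDown_add_mem hc (d := d) (v := c + 6 * d - 2 - (x + secondRank d x)) (by omega)
      with h | h <;> omega

theorem exists_three_voters_two_levels (hc : 1 ≤ c) (hcd : c ≤ d) :
    ∃ u : Fin 3 → Equiv.Perm (Fin (4 * d)), ∀ x,
      bordaScore u x = c + 5 * d + 1 ∨ bordaScore u x = c + 5 * d + 1 + d := by
  refine ⟨![Equiv.refl _, permOfInjOn (secondRank d) secondRank_mapsTo secondRank_injOn,
    permOfInjOn (thirdRank c d) (thirdRank_mapsTo hc hcd) (thirdRank_injOn hc hcd)], fun x => ?_⟩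
  have := add_secondRank_add_thirdRank hc hcd x.isLt
  simp only [bordaScore, Fin.sum_univ_three, Matrix.cons_val_zero, Matrix.cons_val_one,
    Matrix.cons_val_two, Matrix.head_cons, Matrix.tail_cons, Equiv.refl_apply,
    permOfInjOn_apply_val]
  omega

end Borda

open Borda in
theorem stmt8_general (n : ℕ) (hn : Odd n) (hn3 : 3 ≤ n) (s₁ s₂ : ℕ)
    (h₁ : Odd s₁) (h₂ : Odd s₂) :
    InBordaRange n [2 * s₁, 2 * s₂] := by
  obtain ⟨a, rfl⟩ := h₁
  obtain ⟨b, rfl⟩ := h₂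
  obtain ⟨k, rfl⟩ : ∃ k, n = 3 + 2 * k := by
    obtain ⟨t, rfl⟩ := hn
    exact ⟨t - 1, by omega⟩
  obtain ⟨u, hu⟩ := exists_three_voters_two_levels (c := a + 1) (d := a + b + 1) (by omega)
    (by omega)
  refine InBordaRange.add_mul_two ?_ k
  refine inBordaRange_pair_of_two_levels u (by ring) (by omega : 0 < a + b + 1) hu ?_
  refine Nat.eq_of_mul_eq_mul_right two_pos ?_
  rw [sum_bordaScore_mul_two]
  ring

theorem stmt8 (n : ℕ) (hn : Odd n) (hn3 : 3 ≤ n) (s₁ s₂ : ℕ)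
    (h₁ : Odd s₁) (h₂ : Odd s₂) (hp₁ : 0 < s₁) (hp₂ : 0 < s₂) :
    InBordaRange n [2 * s₁, 2 * s₂] :=
  stmt8_general n hn hn3 s₁ s₂ h₁ h₂
end

section
/- For every odd n ≥ 3 and every even T ≥ 2, the pattern (2,2,...,2) with T levels each of size 2 is in the Borda range for n voters; if T is odd, it is not in the Borda range for any odd n. -/
/-!
Existence: three voters on four alternatives give the Borda scores 7, 7, 8, 8; applying them
blockwise to `q` blocks of four alternatives shifts the scores of block `a` by `12 a`, which yields
`2q` classes of size two. A voter together with its reversed order adds the same amount `M + 1` to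
every score, so further pairs of voters reach every odd `n ≥ 3`.

Non-existence: the scores of all alternatives sum to `n M (M + 1) / 2`, which for `M = 2T` is odd
when `n` and `T` are, whereas classes of size two make that sum even.
-/

open Finset

section Profiles

variable {n M : ℕ}

lemma bordaScore_append {n' : ℕ} (u : Fin n → Equiv.Perm (Fin M))
    (v : Fin n' → Equiv.Perm (Fin M)) (x : Fin M) :
    bordaScore (Fin.append u v) x = bordaScore u x + bordaScore v x := by
  simp only [bordaScore, Fin.sum_univ_add, Fin.append_left, Fin.append_right]

lemma bordaScore_add_bordaScore_reverse (u : Fin n → Equiv.Perm (Fin M)) (x : Fin M) :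
    bordaScore u x + bordaScore (fun i => (u i).trans Fin.revPerm) x = n * (M + 1) := by
  simp only [bordaScore, ← sum_add_distrib, Equiv.trans_apply, Fin.revPerm_apply, Fin.val_rev]
  rw [Fintype.sum_congr _ (fun _ => M + 1) fun i => by have := (u i x).isLt; omega]
  simp

lemma sum_bordaScore_mul_two (u : Fin n → Equiv.Perm (Fin M)) :
    (∑ x, bordaScore u x) * 2 = n * (M * (M + 1)) := by
  have hvoter : ∀ i, ∑ x, ((u i x : ℕ) + 1) = ∑ k ∈ range (M + 1), k := fun i => by
    rw [Equiv.sum_comp (u i) (fun y : Fin M => (y : ℕ) + 1), Fin.sum_univ_eq_sum_range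
      (· + 1), sum_range_succ']
    rfl
  simp only [bordaScore]
  rw [sum_comm]
  simp only [hvoter, sum_const, card_univ, Fintype.card_fin, smul_eq_mul,
    mul_assoc, sum_range_id_mul_two, Nat.add_sub_cancel]
  ring

end Profiles

lemma even_sum_of_even_card_fiber {α M : Type*} [Fintype α] [AddCommMonoid M] [DecidableEq M]
    (f : α → M) (hf : ∀ x, Even #{y | f y = f x}) : Even (∑ x, f x) := by
  rw [show ∑ x, f x = ∑ x, id (f x) from rfl, sum_comp id f]
  refine even_sum _ fun b hb => ?_
  obtain ⟨x, -, rfl⟩ := mem_image.mp hb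
  obtain ⟨r, hr⟩ := hf x
  exact ⟨r • f x, by rw [hr, add_nsmul, id]⟩

theorem not_inBordaRange_replicate_two {n T : ℕ} (hn : Odd n) (hT : Odd T) :
    ¬ InBordaRange n (List.replicate T 2) := by
  rintro ⟨u, s, -, hcover, hcard⟩
  have heven : Even (∑ x, bordaScore u x) := even_sum_of_even_card_fiber _ fun x => by
    obtain ⟨j, hj⟩ := hcover x
    simp only [hj, hcard j, List.get_eq_getElem, List.getElem_replicate, even_two]
  have htotal := sum_bordaScore_mul_two u
  generalize ∑ x, bordaScore u x = S at heven htotal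
  rw [List.sum_replicate, smul_eq_mul] at htotal
  have hS : S = n * (T * (T * 2 + 1)) := by
    apply Nat.eq_of_mul_eq_mul_right two_pos
    rw [htotal]
    ring
  exact Nat.not_even_iff_odd.mpr (hS ▸ hn.mul (hT.mul (by simp))) heven

section BlockProfiles

variable {n k : ℕ}

def blockPerm (q : ℕ) (σ : Equiv.Perm (Fin k)) : Equiv.Perm (Fin (q * k)) :=
  finProdFinEquiv.permCongr ((Equiv.refl (Fin q)).prodCongr σ)

lemma blockPerm_apply_val (q : ℕ) (σ : Equiv.Perm (Fin k)) (x : Fin (q * k)) :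
    (blockPerm q σ x : ℕ) = σ x.modNat + k * x.divNat := by
  simp [blockPerm, Equiv.permCongr_apply, finProdFinEquiv_apply_val, finProdFinEquiv_symm_apply]

lemma bordaScore_blockPerm (q : ℕ) (u : Fin n → Equiv.Perm (Fin k)) (x : Fin (q * k)) :
    bordaScore (fun i => blockPerm q (u i)) x = bordaScore u x.modNat + n * k * x.divNat := by
  simp only [bordaScore, blockPerm_apply_val, add_right_comm _ (k * _), sum_add_distrib, sum_const,
    card_univ, Fintype.card_fin, smul_eq_mul, mul_assoc]

end BlockProfiles

def baseProfile : Fin 3 → Equiv.Perm (Fin 4) :=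
  ![1, (finRotate 4).symm, Equiv.swap 0 3 * Equiv.swap 0 1]

lemma bordaScore_baseProfile (b : Fin 4) : bordaScore baseProfile b = 7 + b / 2 := by
  revert b
  decide

def oddProfile (q m : ℕ) : Fin (3 + (m + m)) → Equiv.Perm (Fin (q * 4)) :=
  Fin.append (fun i => blockPerm q (baseProfile i))
    (Fin.append (fun _ : Fin m => 1) fun _ => (1 : Equiv.Perm (Fin (q * 4))).trans Fin.revPerm)

lemma bordaScore_oddProfile (q m : ℕ) (x : Fin (q * 4)) :
    bordaScore (oddProfile q m) x = m * (q * 4 + 1) + 7 + 12 * (x / 4) + x % 4 / 2 := by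
  rw [oddProfile, bordaScore_append, bordaScore_append,
    bordaScore_add_bordaScore_reverse (fun _ => 1), bordaScore_blockPerm, bordaScore_baseProfile,
    Fin.coe_modNat, Fin.coe_divNat]
  ring

lemma inBordaRange_replicate {n T k M : ℕ} (hM : M = T * k) (u : Fin n → Equiv.Perm (Fin M))
    (s : Fin T → ℕ) (hs : StrictMono s) (hcover : ∀ x, ∃ j, bordaScore u x = s j)
    (hcard : ∀ j, #{x | bordaScore u x = s j} = k) : InBordaRange n (List.replicate T k) := by
  subst hM
  have hsum : (List.replicate T k).sum = T * k := by rw [List.sum_replicate, smul_eq_mul]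
  have hlen : (List.replicate T k).length = T := List.length_replicate
  unfold InBordaRange
  rw [hsum]
  refine ⟨u, s ∘ Fin.cast hlen, hs.comp fun _ _ h => h, fun x => ?_, fun j => ?_⟩
  · obtain ⟨j, hj⟩ := hcover x
    exact ⟨Fin.cast hlen.symm j, hj⟩
  · simpa using hcard (Fin.cast hlen j)

theorem inBordaRange_replicate_two (q m : ℕ) :
    InBordaRange (3 + (m + m)) (List.replicate (q + q) 2) := by
  refine inBordaRange_replicate (by ring) (oddProfile q m)
    (fun j => m * (q * 4 + 1) + 7 + 12 * (j / 2) + j % 2) (fun a b hab => ?_) (fun x => ?_)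
    (fun j => ?_)
  · have : (a : ℕ) < b := hab
    dsimp only
    omega
  · refine ⟨⟨x / 2, by omega⟩, ?_⟩
    rw [bordaScore_oddProfile]
    dsimp only
    omega
  · have hfiber : ({x | bordaScore (oddProfile q m) x =
          m * (q * 4 + 1) + 7 + 12 * (j / 2) + j % 2} : Finset (Fin (q * 4))) =
        {⟨2 * j, by omega⟩, ⟨2 * j + 1, by omega⟩} := by
      ext x
      simp only [mem_filter, mem_univ, true_and, mem_insert, mem_singleton, Fin.ext_iff,
        bordaScore_oddProfile]
      omega
    rw [hfiber, card_pair (by simp [Fin.ext_iff])]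

theorem stmt9 :
    (∀ n, Odd n → 3 ≤ n → ∀ T, Even T → 2 ≤ T →
      InBordaRange n (List.replicate T 2)) ∧
    (∀ T, Odd T → ∀ n, Odd n → ¬ InBordaRange n (List.replicate T 2)) := by
  refine ⟨fun n hn hn3 T hT _ => ?_, fun T hT n hn => not_inBordaRange_replicate_two hn hT⟩
  obtain ⟨m, rfl⟩ : ∃ m, n = 3 + (m + m) := by
    obtain ⟨k, rfl⟩ := hn
    exact ⟨k - 1, by omega⟩
  obtain ⟨q, rfl⟩ := hT
  exact inBordaRange_replicate_two q m
end

section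
/- For every odd n ≥ 3 and every positive integer k, the pattern (4, 2, 4, 4, ..., 4, 2) consisting of a level of size 4, a level of size 2, then k - 1 further levels of size 4, then a level of size 2, is in the Borda range for n voters. -/
/-!
Adding a voter together with the reversal of its order raises every Borda score by `m + 1`, so
it suffices to treat three voters. Two of them rank the `4k + 4` alternatives as `0, 1, 2, …`,
which gives `x` the score `2x` up to a constant; the third ranks `x` at `t_j - 2x`, where `j` is
the level of `x` and `t_j` increases with `j`. On each level these ranks form a progression of
step 2: the even ranks are used up by the levels `0, 3, 5, …` and the odd ones by `1, 2, 4, …`,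
each level taking the next block of its parity, and the top level takes the two ranks left over,
so the third ranking is a permutation.
-/

open Finset

section BordaRange

variable {n m : ℕ}

theorem bordaScore_snoc_reverse_pair (u : Fin n → Equiv.Perm (Fin m)) (σ : Equiv.Perm (Fin m))
    (x : Fin m) :
    bordaScore (Fin.snoc (α := fun _ => Equiv.Perm (Fin m))
      (Fin.snoc (α := fun _ => Equiv.Perm (Fin m)) u σ) (σ.trans Fin.revPerm)) x
      = bordaScore u x + (m + 1) := by
  have := (σ x).isLt
  simp only [bordaScore, Fin.sum_univ_castSucc, Fin.snoc_castSucc, Fin.snoc_last,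
    Equiv.trans_apply, Fin.revPerm_apply, Fin.val_rev]
  omega

theorem InBordaRange.add_two {p : List ℕ} (h : InBordaRange n p) : InBordaRange (n + 2) p := by
  obtain ⟨u, scores, hmono, hscore, hcard⟩ := h
  refine ⟨Fin.snoc (α := fun _ => Equiv.Perm (Fin p.sum))
      (Fin.snoc (α := fun _ => Equiv.Perm (Fin p.sum)) u (Equiv.refl _))
      ((Equiv.refl _).trans Fin.revPerm),
    fun j => scores j + (p.sum + 1), hmono.add_const _, fun x => ?_, fun j => ?_⟩
  all_goals simp only [bordaScore_snoc_reverse_pair, add_left_inj]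
  exacts [hscore x, hcard j]

theorem InBordaRange.add_two_mul {p : List ℕ} (h : InBordaRange n p) (w : ℕ) :
    InBordaRange (n + 2 * w) p := by
  induction w with
  | zero => exact h
  | succ w ih => exact ih.add_two

theorem inBordaRange_of_level {p : List ℕ} (hm : p.sum = m) (u : Fin n → Equiv.Perm (Fin m))
    (level : Fin m → ℕ) (score : ℕ → ℕ) (hmono : StrictMonoOn score (Set.Iio p.length))
    (hlevel : ∀ x, level x < p.length) (hscore : ∀ x, bordaScore u x = score (level x))
    (hcard : ∀ j (hj : j < p.length), #{x | level x = j} = p[j]) :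
    InBordaRange n p := by
  subst hm
  refine ⟨u, fun j => score j, fun i j hij => hmono i.isLt j.isLt hij,
    fun x => ⟨⟨level x, hlevel x⟩, hscore x⟩, fun j => ?_⟩
  have hfiber : ∀ x, bordaScore u x = score j ↔ level x = j := fun x => by
    rw [hscore, (hmono.injOn).eq_iff (hlevel x) j.isLt]
  simp only [hfiber, List.get_eq_getElem]
  exact hcard j j.isLt

theorem Fin.card_filter_of_iff_mem_Ico {a b : ℕ} (hb : b ≤ m) (P : Fin m → Prop)
    [DecidablePred P]
    (hP : ∀ x : Fin m, P x ↔ a ≤ x ∧ x < b) : #{x | P x} = b - a := by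
  have hlt : ∀ i ∈ Ico a b, i < m := fun i hi => (mem_Ico.mp hi).2.trans_le hb
  rw [← Nat.card_Ico, ← card_attachFin _ hlt]
  congr 1
  ext x
  simp [mem_attachFin, hP]

end BordaRange

section FourTwoPattern

variable {k : ℕ}

def fourTwoPattern (k : ℕ) : List ℕ := [4, 2] ++ List.replicate (k - 1) 4 ++ [2]

theorem fourTwoPattern_sum (hk : 1 ≤ k) : (fourTwoPattern k).sum = 4 * k + 4 := by
  simp [fourTwoPattern, List.sum_replicate]
  omega

theorem fourTwoPattern_length (hk : 1 ≤ k) : (fourTwoPattern k).length = k + 2 := by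
  simp [fourTwoPattern]
  omega

theorem fourTwoPattern_getElem (hk : 1 ≤ k) {j : ℕ} (hj : j < (fourTwoPattern k).length) :
    (fourTwoPattern k)[j] = if j = 1 ∨ j = k + 1 then 2 else 4 := by
  rw [fourTwoPattern_length hk] at hj
  simp only [fourTwoPattern, List.cons_append, List.nil_append, List.getElem_cons,
    List.getElem_append, List.length_replicate, List.getElem_replicate]
  split_ifs <;> omega

def level (k x : ℕ) : ℕ :=
  if x < 4 then 0 else if x < 6 then 1 else if 4 * k + 2 ≤ x then k + 1 else (x + 2) / 4

def levelTarget (k j : ℕ) : ℕ :=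
  if j = 0 then 6 else if j = 1 then 11
  else if j = k + 1 then 12 * k + 6 + k % 2
  else 12 * j - 2 + (j + 1) % 2

def balancingRank (k x : ℕ) : ℕ := levelTarget k (level k x) - 2 * x

theorem level_lt_add_two (x : ℕ) : level k x < k + 2 := by
  unfold level; split_ifs <;> omega

theorem card_filter_level_eq (hk : 1 ≤ k) {j : ℕ} (hj : j < k + 2) :
    #{x : Fin (4 * k + 4) | level k x = j} = if j = 1 ∨ j = k + 1 then 2 else 4 := by
  have hcard : ∀ a b, b ≤ 4 * k + 4 → (∀ x < 4 * k + 4, level k x = j ↔ a ≤ x ∧ x < b) →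
      #{x : Fin (4 * k + 4) | level k x = j} = b - a :=
    fun a b hb hfiber => Fin.card_filter_of_iff_mem_Ico hb _ fun x => hfiber x x.isLt
  rcases (by omega : j = 0 ∨ j = 1 ∨ j = k + 1 ∨ (2 ≤ j ∧ j ≤ k)) with h | h | h | h
  · exact (hcard 0 4 (by omega) (fun x hx => by unfold level; split_ifs <;> omega)).trans
      (by split_ifs <;> omega)
  · exact (hcard 4 6 (by omega) (fun x hx => by unfold level; split_ifs <;> omega)).trans
      (by split_ifs <;> omega)
  · exact (hcard (4 * k + 2) (4 * k + 4) (by omega)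
      (fun x hx => by unfold level; split_ifs <;> omega)).trans (by split_ifs <;> omega)
  · exact (hcard (4 * j - 2) (4 * j + 2) (by omega)
      (fun x hx => by unfold level; split_ifs <;> omega)).trans (by split_ifs <;> omega)

theorem levelTarget_strictMonoOn (hk : 1 ≤ k) :
    StrictMonoOn (levelTarget k) (Set.Iio (k + 2)) := by
  intro i hi j hj hij
  simp only [Set.mem_Iio] at hi hj
  unfold levelTarget; split_ifs <;> omega

-- The same function without the nested `if`s of `level` and `levelTarget`, which `omega` can
-- compare at two positions.
theorem balancingRank_eq (hk : 1 ≤ k) (x : ℕ) : balancingRank k x =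
    if x < 4 then 6 - 2 * x else if x < 6 then 11 - 2 * x
    else if 4 * k + 2 ≤ x then 12 * k + 6 + k % 2 - 2 * x
    else 12 * ((x + 2) / 4) - 2 + ((x + 2) / 4 + 1) % 2 - 2 * x := by
  unfold balancingRank level
  split_ifs <;> unfold levelTarget <;> split_ifs <;> first | omega | contradiction

theorem balancingRank_add_two_mul (hk : 1 ≤ k) {x : ℕ} (hx : x < 4 * k + 4) :
    balancingRank k x + 2 * x = levelTarget k (level k x) := by
  unfold balancingRank level
  split_ifs <;> unfold levelTarget <;> split_ifs <;> first | omega | contradiction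

theorem balancingRank_lt (hk : 1 ≤ k) {x : ℕ} (hx : x < 4 * k + 4) :
    balancingRank k x < 4 * k + 4 := by
  rw [balancingRank_eq hk]; split_ifs <;> omega

theorem balancingRank_injOn (hk : 1 ≤ k) : Set.InjOn (balancingRank k) (Set.Iio (4 * k + 4)) := by
  intro x hx y hy hxy
  simp only [Set.mem_Iio] at hx hy
  rw [balancingRank_eq hk, balancingRank_eq hk] at hxy; split_ifs at hxy <;> omega

theorem exists_perm_val_eq_balancingRank (hk : 1 ≤ k) :
    ∃ σ : Equiv.Perm (Fin (4 * k + 4)), ∀ x, (σ x : ℕ) = balancingRank k x := by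
  let f : Fin (4 * k + 4) → Fin (4 * k + 4) := fun x =>
    ⟨balancingRank k x, balancingRank_lt hk x.isLt⟩
  have hf : Function.Injective f := fun x y h =>
    Fin.ext (balancingRank_injOn hk x.isLt y.isLt (congrArg Fin.val h))
  exact ⟨Equiv.ofBijective f hf.bijective_of_finite, fun x => rfl⟩

theorem inBordaRange_three_fourTwoPattern (hk : 1 ≤ k) :
    InBordaRange 3 (fourTwoPattern k) := by
  obtain ⟨σ, hσ⟩ := exists_perm_val_eq_balancingRank hk
  refine inBordaRange_of_level (fourTwoPattern_sum hk) ![σ, 1, 1] (fun x => level k x)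
    (fun j => levelTarget k j + 3) ?_ (fun x => ?_) (fun x => ?_) (fun j hj => ?_)
  · rw [fourTwoPattern_length hk]
    exact fun i hi j hj hij => Nat.add_lt_add_right (levelTarget_strictMonoOn hk hi hj hij) 3
  · rw [fourTwoPattern_length hk]
    exact level_lt_add_two x
  · have := balancingRank_add_two_mul hk x.isLt
    simp only [bordaScore, Fin.sum_univ_three, Matrix.cons_val_zero, Matrix.cons_val_one,
      Matrix.cons_val, Equiv.Perm.coe_one, id_eq, hσ]
    omega
  · rw [card_filter_level_eq hk (by rwa [fourTwoPattern_length hk] at hj),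
      fourTwoPattern_getElem hk hj]

end FourTwoPattern

theorem stmt11 (n : ℕ) (hn : Odd n) (hn3 : 3 ≤ n) (k : ℕ) (hk : 1 ≤ k) :
    InBordaRange n ([4, 2] ++ List.replicate (k - 1) 4 ++ [2]) := by
  obtain ⟨w, rfl⟩ : ∃ w, n = 3 + 2 * w := ⟨(n - 3) / 2, by obtain ⟨c, rfl⟩ := hn; omega⟩
  exact (inBordaRange_three_fourTwoPattern hk).add_two_mul w
end

section
/- Let (m_1,...,m_T) be a finite sequence. If every m_i ∈ {2,4} and the number of indices i with m_i = 2 is a positive even number, then (m_1,...,m_T) is in the Borda range for every odd n ≥ 3. -/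
open Finset

def aScore {M : ℕ} (L : ℕ) (u : Fin 3 → Equiv.Perm (Fin M)) (x : Fin M) : ℤ :=
  (∑ v : Fin 3, (((u v x).val : ℤ) + 1)) -
    ((Finset.univ.filter (fun v : Fin 3 => v.val < L ∧ (u v x).val = 0)).card : ℤ)

def BlockEq {K : ℕ} (L R : ℕ) (π : Fin 3 → Equiv.Perm (Fin K)) (τ : Fin K → ℤ) : Prop :=
  ∀ a : Fin K, (∑ v : Fin 3, (((π v a).val : ℤ) + 1))
    + ((Finset.univ.filter (fun v : Fin 3 => v.val < R ∧ (π v a).val = K - 1)).card : ℤ)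
    - ((Finset.univ.filter (fun v : Fin 3 => v.val < L ∧ (π v a).val = 0)).card : ℤ) = τ a

lemma glueCore {K M : ℕ} (hK : 2 ≤ K) (L R : ℕ) (hM : R ≠ 0 → M ≠ 0)
    (π : Fin 3 → Equiv.Perm (Fin K)) (τ : Fin K → ℤ) (hπ : BlockEq L R π τ)
    (u' : Fin 3 → Equiv.Perm (Fin M)) :
    ∃ u : Fin 3 → Equiv.Perm (Fin (K + M)),
      (∀ a, aScore L u (Fin.castAdd M a) = τ a) ∧
      (∀ b, aScore L u (Fin.natAdd K b) = 3 * K + aScore R u' b) := by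
  set pA : Fin (K + M) := ⟨K - 1, by omega⟩ with hpA
  set pB : Fin (K + M) := ⟨if M = 0 then K - 1 else K, by split <;> omega⟩ with hpB
  set g : Fin 3 → Equiv.Perm (Fin (K + M)) := fun v =>
    (finSumFinEquiv.symm.trans (((Equiv.sumCongr (π v) (u' v))).trans finSumFinEquiv)) with hg
  set u : Fin 3 → Equiv.Perm (Fin (K + M)) := fun v =>
    (g v).trans (if v.val < R then Equiv.swap pA pB else Equiv.refl _) with hu
  have hgl : ∀ v a, (g v) (Fin.castAdd M a) = Fin.castAdd M ((π v) a) := by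
    intro v a
    simp [hg, Equiv.trans_apply, finSumFinEquiv_symm_apply_castAdd]
  have hgr : ∀ v b, (g v) (Fin.natAdd K b) = Fin.natAdd K ((u' v) b) := by
    intro v b
    simp [hg, Equiv.trans_apply, finSumFinEquiv_symm_apply_natAdd]
  have hAv : (pA : ℕ) = K - 1 := rfl
  have hBv : (pB : ℕ) = if M = 0 then K - 1 else K := rfl
  have hvl : ∀ v a, ((u v) (Fin.castAdd M a)).val
      = if v.val < R ∧ ((π v) a).val = K - 1 then K else ((π v) a).val := by
    intro v a
    have hdef : (u v) (Fin.castAdd M a)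
        = (if v.val < R then Equiv.swap pA pB else Equiv.refl _) ((g v) (Fin.castAdd M a)) :=
      rfl
    rw [hdef, hgl]
    by_cases hv : v.val < R
    · have hM0 : M ≠ 0 := hM (by omega)
      rw [if_pos hv]
      by_cases h1 : ((π v) a).val = K - 1
      · have e : Fin.castAdd M ((π v) a) = pA := by
          apply Fin.ext
          rw [Fin.coe_castAdd, hAv, h1]
        rw [e, Equiv.swap_apply_left, if_pos ⟨hv, h1⟩, hBv, if_neg hM0]
      · have hne1 : Fin.castAdd M ((π v) a) ≠ pA := by
          intro hc
          have hcv := congrArg Fin.val hc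
          rw [Fin.coe_castAdd, hAv] at hcv
          exact h1 hcv
        have hne2 : Fin.castAdd M ((π v) a) ≠ pB := by
          intro hc
          have hcv := congrArg Fin.val hc
          rw [Fin.coe_castAdd, hBv, if_neg hM0] at hcv
          have := ((π v) a).isLt
          omega
        rw [Equiv.swap_apply_of_ne_of_ne hne1 hne2, if_neg (by tauto)]
        rfl
    · rw [if_neg hv, if_neg (by tauto)]
      rfl
  have hvr : ∀ v b, ((u v) (Fin.natAdd K b)).val
      = if v.val < R ∧ ((u' v) b).val = 0 then K - 1 else K + ((u' v) b).val := by
    intro v b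
    have hdef : (u v) (Fin.natAdd K b)
        = (if v.val < R then Equiv.swap pA pB else Equiv.refl _) ((g v) (Fin.natAdd K b)) :=
      rfl
    rw [hdef, hgr]
    by_cases hv : v.val < R
    · have hM0 : M ≠ 0 := hM (by omega)
      rw [if_pos hv]
      by_cases h1 : ((u' v) b).val = 0
      · have e : Fin.natAdd K ((u' v) b) = pB := by
          apply Fin.ext
          rw [Fin.coe_natAdd, hBv, if_neg hM0, h1]
          omega
        rw [e, Equiv.swap_apply_right, if_pos ⟨hv, h1⟩, hAv]
      · have hne1 : Fin.natAdd K ((u' v) b) ≠ pA := by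
          intro hc
          have hcv := congrArg Fin.val hc
          rw [Fin.coe_natAdd, hAv] at hcv
          omega
        have hne2 : Fin.natAdd K ((u' v) b) ≠ pB := by
          intro hc
          have hcv := congrArg Fin.val hc
          rw [Fin.coe_natAdd, hBv, if_neg hM0] at hcv
          omega
        rw [Equiv.swap_apply_of_ne_of_ne hne1 hne2, if_neg (by tauto)]
        rfl
    · rw [if_neg hv, if_neg (by tauto)]
      rfl
  refine ⟨u, ?_, ?_⟩
  · intro a
    have e1 : ∀ v : Fin 3, (((u v (Fin.castAdd M a)).val : ℤ) + 1)
        = ((((π v) a).val : ℤ) + 1)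
          + (if v.val < R ∧ ((π v) a).val = K - 1 then 1 else 0) := by
      intro v
      rw [hvl]
      split_ifs with h
      · have h2 := h.2
        omega
      · omega
    have e2 : Finset.univ.filter (fun v : Fin 3 => v.val < L ∧ ((u v) (Fin.castAdd M a)).val = 0)
        = Finset.univ.filter (fun v : Fin 3 => v.val < L ∧ ((π v) a).val = 0) := by
      apply Finset.filter_congr
      intro v _
      rw [hvl]
      split_ifs with h
      · have h2 := h.2
        constructor <;> (rintro ⟨h3, h4⟩; exact absurd h4 (by omega))
      · tauto
    unfold aScore
    rw [e2, Finset.sum_congr rfl (fun v _ => e1 v), Finset.sum_add_distrib, Finset.sum_boole]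
    have := hπ a
    push_cast at this ⊢
    linarith [this]
  · intro b
    have e1 : ∀ v : Fin 3, (((u v (Fin.natAdd K b)).val : ℤ) + 1)
        = (((K : ℤ) + ((u' v) b).val) + 1)
          - (if v.val < R ∧ ((u' v) b).val = 0 then 1 else 0) := by
      intro v
      rw [hvr]
      split_ifs with h
      · have h2 := h.2
        omega
      · omega
    have e2 : Finset.univ.filter (fun v : Fin 3 => v.val < L ∧ ((u v) (Fin.natAdd K b)).val = 0)
        = ∅ := by
      apply Finset.filter_false_of_mem
      intro v _
      rw [hvr]
      split_ifs with h <;> omega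
    unfold aScore
    rw [e2, Finset.sum_congr rfl (fun v _ => e1 v), Finset.sum_sub_distrib, Finset.sum_boole]
    simp only [Finset.card_empty, Nat.cast_zero, sub_zero, Finset.sum_add_distrib]
    rw [Finset.sum_const]
    simp only [Finset.card_univ, Fintype.card_fin]
    push_cast
    ring

def Real3 (L M : ℕ) (q : List ℕ) : Prop :=
  ∃ u : Fin 3 → Equiv.Perm (Fin M), ∃ s : Fin q.length → ℤ,
    StrictMono s ∧ (∀ j, 3 ≤ s j ∧ s j ≤ 3 * (M : ℤ)) ∧
    (∀ x, ∃ j, aScore L u x = s j) ∧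
    (∀ j, (Finset.univ.filter (fun x : Fin M => aScore L u x = s j)).card = q.get j)

lemma card_filter_fin_add {K M : ℕ} (P : Fin (K + M) → Prop) [DecidablePred P] :
    (Finset.univ.filter P).card
      = (Finset.univ.filter (fun a : Fin K => P (Fin.castAdd M a))).card
        + (Finset.univ.filter (fun b : Fin M => P (Fin.natAdd K b))).card := by
  simp only [Finset.card_filter]
  exact Fin.sum_univ_add (f := fun i => if P i then 1 else 0)


lemma strictMono_cons {n : ℕ} {t : Fin n → ℤ} (ht : StrictMono t) (σ : ℤ)
    (hσ : ∀ j, σ < t j) : StrictMono (Fin.cons σ t) := by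
  intro a b hab
  induction a using Fin.cases with
  | zero =>
    induction b using Fin.cases with
    | zero => exact absurd hab (lt_irrefl _)
    | succ j => rw [Fin.cons_zero, Fin.cons_succ]; exact hσ j
  | succ i =>
    induction b using Fin.cases with
    | zero =>
      exfalso
      rw [Fin.lt_def] at hab
      simp [Fin.val_succ] at hab
    | succ j =>
      rw [Fin.cons_succ, Fin.cons_succ]
      exact ht (by rwa [Fin.succ_lt_succ_iff] at hab)

lemma glueSingle {k : ℕ} (hk : 2 ≤ k) {L R : ℕ} (σ : ℤ) (hσl : 3 ≤ σ) (hσu : σ ≤ 3 * k)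
    (π : Fin 3 → Equiv.Perm (Fin k)) (hπ : BlockEq L R π (fun _ => σ))
    {q : List ℕ} (hM : R ≠ 0 → q.sum ≠ 0) (h : Real3 R q.sum q) :
    Real3 L ((k :: q).sum) (k :: q) := by
  obtain ⟨u', s', hmono, hbd, hcov, hcard⟩ := h
  obtain ⟨u, hul, hur⟩ := glueCore hk L R hM π _ hπ u'
  rw [show (k :: q).sum = k + q.sum from List.sum_cons]
  have main : ∃ u : Fin 3 → Equiv.Perm (Fin (k + q.sum)), ∃ s : Fin (q.length + 1) → ℤ,
      StrictMono s ∧ (∀ j, 3 ≤ s j ∧ s j ≤ 3 * ((k + q.sum : ℕ) : ℤ)) ∧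
      (∀ x, ∃ j, aScore L u x = s j) ∧
      (∀ j, (Finset.univ.filter (fun x => aScore L u x = s j)).card = (k :: q).get j) := by
    refine ⟨u, Fin.cons σ (fun j => 3 * k + s' j), ?_, ?_, ?_, ?_⟩
    · refine strictMono_cons (fun a b hab => by have := hmono hab; omega) σ (fun j => ?_)
      have := (hbd j).1
      omega
    · intro j
      have hcast : ((k + q.sum : ℕ) : ℤ) = (k : ℤ) + (q.sum : ℤ) := Nat.cast_add _ _
      induction j using Fin.cases with
      | zero =>
        rw [Fin.cons_zero]
        refine ⟨hσl, ?_⟩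
        rw [hcast]
        omega
      | succ j =>
        rw [Fin.cons_succ]
        have h1 := (hbd j).1
        have h2 := (hbd j).2
        rw [hcast]
        constructor <;> omega
    · intro x
      induction x using Fin.addCases with
      | left a => exact ⟨0, by rw [hul a, Fin.cons_zero]⟩
      | right b =>
        obtain ⟨j, hj⟩ := hcov b
        exact ⟨j.succ, by rw [hur b, hj, Fin.cons_succ]⟩
    · intro j
      rw [card_filter_fin_add]
      induction j using Fin.cases with
      | zero =>
        rw [Fin.cons_zero]
        have e1 : (Finset.univ.filter
            (fun a : Fin k => aScore L u (Fin.castAdd q.sum a) = σ)) = Finset.univ :=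
          Finset.filter_true_of_mem (fun a _ => hul a)
        have e2 : (Finset.univ.filter
            (fun b : Fin q.sum => aScore L u (Fin.natAdd k b) = σ)) = ∅ := by
          apply Finset.filter_false_of_mem
          intro b _
          rw [hur b]
          obtain ⟨j', hj'⟩ := hcov b
          rw [hj']
          have := (hbd j').1
          omega
        rw [e1, e2]
        simp
      | succ j =>
        rw [Fin.cons_succ]
        have e1 : (Finset.univ.filter
            (fun a : Fin k => aScore L u (Fin.castAdd q.sum a) = 3 * k + s' j)) = ∅ := by
          apply Finset.filter_false_of_mem
          intro a _
          rw [hul a]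
          have := (hbd j).1
          omega
        have e2 : (Finset.univ.filter
            (fun b : Fin q.sum => aScore L u (Fin.natAdd k b) = 3 * k + s' j))
            = (Finset.univ.filter (fun b : Fin q.sum => aScore R u' b = s' j)) := by
          apply Finset.filter_congr
          intro b _
          rw [hur b]
          constructor
          · intro hh; omega
          · intro hh; omega
        rw [e1, e2]
        simp only [Finset.card_empty, zero_add]
        rw [hcard j]
        rfl
  exact main

lemma glueDouble {L R : ℕ} (σ₂ : ℤ) (hσ₂ : σ₂ = 15 ∨ σ₂ = 16)
    (π : Fin 3 → Equiv.Perm (Fin 6))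
    (hπ : BlockEq L R π (fun a => if a.val < 4 then 8 else σ₂))
    {q : List ℕ} (hM : R ≠ 0 → q.sum ≠ 0) (h : Real3 R q.sum q) :
    Real3 L ((4 :: 2 :: q).sum) (4 :: 2 :: q) := by
  obtain ⟨u', s', hmono, hbd, hcov, hcard⟩ := h
  obtain ⟨u, hul, hur⟩ := glueCore (by norm_num) L R hM π _ hπ u'
  rw [show (4 :: 2 :: q).sum = 6 + q.sum by simp [List.sum_cons]; omega]
  have main : ∃ u : Fin 3 → Equiv.Perm (Fin (6 + q.sum)), ∃ s : Fin (q.length + 1 + 1) → ℤ,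
      StrictMono s ∧ (∀ j, 3 ≤ s j ∧ s j ≤ 3 * ((6 + q.sum : ℕ) : ℤ)) ∧
      (∀ x, ∃ j, aScore L u x = s j) ∧
      (∀ j, (Finset.univ.filter (fun x => aScore L u x = s j)).card
        = (4 :: 2 :: q).get j) := by
    have hcast : ((6 + q.sum : ℕ) : ℤ) = (6 : ℤ) + (q.sum : ℤ) := Nat.cast_add _ _
    refine ⟨u, Fin.cons 8 (Fin.cons σ₂ (fun j => 18 + s' j)), ?_, ?_, ?_, ?_⟩
    · refine strictMono_cons ?_ 8 ?_
      · refine strictMono_cons (fun a b hab => by have := hmono hab; omega) σ₂ (fun j => ?_)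
        have := (hbd j).1
        omega
      · intro j
        induction j using Fin.cases with
        | zero => rw [Fin.cons_zero]; omega
        | succ j =>
          rw [Fin.cons_succ]
          have := (hbd j).1
          omega
    · intro j
      induction j using Fin.cases with
      | zero => rw [Fin.cons_zero, hcast]; omega
      | succ j =>
        rw [Fin.cons_succ]
        induction j using Fin.cases with
        | zero => rw [Fin.cons_zero, hcast]; omega
        | succ j =>
          rw [Fin.cons_succ]
          have h1 := (hbd j).1
          have h2 := (hbd j).2
          rw [hcast]
          constructor <;> omega
    · intro x
      refine Fin.addCases ?_ ?_ x
      · intro a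
        by_cases ha : a.val < 4
        · refine ⟨0, ?_⟩
          rw [hul a, Fin.cons_zero, if_pos ha]
        · refine ⟨Fin.succ 0, ?_⟩
          rw [hul a, Fin.cons_succ, Fin.cons_zero, if_neg ha]
      · intro b
        obtain ⟨j, hj⟩ := hcov b
        refine ⟨(j.succ).succ, ?_⟩
        rw [hur b, hj, Fin.cons_succ, Fin.cons_succ]
        norm_num
    · intro j
      rw [card_filter_fin_add]
      have hall : ∀ (c : ℤ), (∀ j', c ≠ 18 + s' j') →
          (Finset.univ.filter (fun b : Fin q.sum => aScore L u (Fin.natAdd 6 b) = c)) = ∅ := by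
        intro c hc
        apply Finset.filter_false_of_mem
        intro b _
        rw [hur b]
        obtain ⟨j', hj'⟩ := hcov b
        rw [hj']
        intro hcontra
        exact hc j' (by omega)
      have hleft : ∀ (c : ℤ), (Finset.univ.filter
          (fun a : Fin 6 => aScore L u (Fin.castAdd q.sum a) = c))
          = (Finset.univ.filter (fun a : Fin 6 => (if a.val < 4 then (8:ℤ) else σ₂) = c)) := by
        intro c
        apply Finset.filter_congr
        intro a _
        rw [hul a]
      induction j using Fin.cases with
      | zero =>
        rw [Fin.cons_zero, hleft, hall 8 (fun j' => by have := (hbd j').1; omega)]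
        simp only [Finset.card_empty, add_zero]
        rw [show (4 :: 2 :: q).get (0 : Fin (q.length + 1 + 1)) = 4 from rfl]
        rcases hσ₂ with h15 | h15 <;> subst h15 <;> decide
      | succ j =>
        rw [Fin.cons_succ]
        induction j using Fin.cases with
        | zero =>
          rw [Fin.cons_zero, hleft, hall σ₂ (fun j' => by
            have := (hbd j').1
            omega)]
          simp only [Finset.card_empty, add_zero]
          rw [show (4 :: 2 :: q).get (Fin.succ (0 : Fin (q.length + 1))) = 2 from rfl]
          rcases hσ₂ with h15 | h15 <;> subst h15 <;> decide
        | succ j =>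
          rw [Fin.cons_succ]
          have e1 : (Finset.univ.filter
              (fun a : Fin 6 => aScore L u (Fin.castAdd q.sum a) = 18 + s' j)) = ∅ := by
            rw [hleft]
            apply Finset.filter_false_of_mem
            intro a _
            have := (hbd j).1
            rcases hσ₂ with h15 | h15 <;> subst h15 <;> split <;> omega
          have e2 : (Finset.univ.filter
              (fun b : Fin q.sum => aScore L u (Fin.natAdd 6 b) = 18 + s' j))
              = (Finset.univ.filter (fun b : Fin q.sum => aScore R u' b = s' j)) := by
            apply Finset.filter_congr
            intro b _
            rw [hur b]
            constructor
            · intro hh; omega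
            · intro hh; omega
          rw [e1, e2]
          simp only [Finset.card_empty, zero_add]
          rw [hcard j]
          rfl
  exact main

inductive ChainOK : ℕ → List ℕ → Prop
  | nil : ChainOK 0 []
  | two01 {q} : ChainOK 1 q → ChainOK 0 (2 :: q)
  | two10 {q} : ChainOK 0 q → ChainOK 1 (2 :: q)
  | two12 {q} : ChainOK 2 q → ChainOK 1 (2 :: q)
  | two21 {q} : ChainOK 1 q → ChainOK 2 (2 :: q)
  | four02 {q} : ChainOK 2 q → ChainOK 0 (4 :: q)
  | four20 {q} : ChainOK 0 q → ChainOK 2 (4 :: q)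
  | four13 {q} : ChainOK 3 q → ChainOK 1 (4 :: q)
  | four31 {q} : ChainOK 1 q → ChainOK 3 (4 :: q)
  | unitA {q} : ChainOK 0 q → ChainOK 1 (4 :: 2 :: q)
  | unitB {q} : ChainOK 2 q → ChainOK 1 (4 :: 2 :: q)

lemma ChainOK.sum_ne {t : ℕ} {q : List ℕ} (h : ChainOK t q) (ht : t ≠ 0) : q.sum ≠ 0 := by
  cases h <;> simp [List.sum_cons] <;> omega

lemma realNil : Real3 0 ([] : List ℕ).sum [] := by
  refine ⟨fun _ => Equiv.refl _, Fin.elim0, ?_, ?_, ?_, ?_⟩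
  · intro a
    exact a.elim0
  · intro j
    exact j.elim0
  · intro x
    exact x.elim0
  · intro j
    exact j.elim0

def w2 : Fin 3 → Equiv.Perm (Fin 2) := ![Equiv.refl _, Equiv.swap 0 1, Equiv.swap 0 1]

def mkP {k : ℕ} (f g : Fin k → Fin k) (h1 : Function.LeftInverse g f)
    (h2 : Function.RightInverse g f) : Equiv.Perm (Fin k) := ⟨f, g, h1, h2⟩

def w4a : Fin 3 → Equiv.Perm (Fin 4) :=
  ![Equiv.refl _, mkP ![2,3,1,0] ![3,2,0,1] (by decide) (by decide),
    mkP ![3,0,2,1] ![1,3,2,0] (by decide) (by decide)]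
def w4b : Fin 3 → Equiv.Perm (Fin 4) :=
  ![Equiv.refl _, mkP ![2,3,1,0] ![3,2,0,1] (by decide) (by decide),
    mkP ![3,0,1,2] ![1,2,3,0] (by decide) (by decide)]
def w4c : Fin 3 → Equiv.Perm (Fin 4) :=
  ![Equiv.refl _, mkP ![2,1,3,0] ![3,1,0,2] (by decide) (by decide),
    mkP ![3,2,0,1] ![2,3,1,0] (by decide) (by decide)]
def w6 : Fin 3 → Equiv.Perm (Fin 6) :=
  ![mkP ![0,1,2,4,3,5] ![0,1,2,4,3,5] (by decide) (by decide),
    mkP ![1,2,3,0,5,4] ![3,0,1,2,5,4] (by decide) (by decide),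
    mkP ![5,2,0,1,4,3] ![2,3,1,5,4,0] (by decide) (by decide)]

theorem chainReal {L : ℕ} {q : List ℕ} (h : ChainOK L q) : Real3 L q.sum q := by
  induction h with
  | nil => exact realNil
  | two01 h ih =>
    exact glueSingle (by norm_num) 5 (by norm_num) (by norm_num) w2
      (by unfold BlockEq; decide) (fun _ => h.sum_ne (by norm_num)) ih
  | two10 h ih =>
    exact glueSingle (by norm_num) 4 (by norm_num) (by norm_num) w2
      (by unfold BlockEq; decide) (fun h0 => absurd rfl h0) ih
  | two12 h ih =>
    exact glueSingle (by norm_num) 5 (by norm_num) (by norm_num) w2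
      (by unfold BlockEq; decide) (fun _ => h.sum_ne (by norm_num)) ih
  | two21 h ih =>
    exact glueSingle (by norm_num) 4 (by norm_num) (by norm_num) w2
      (by unfold BlockEq; decide) (fun _ => h.sum_ne (by norm_num)) ih
  | four02 h ih =>
    exact glueSingle (by norm_num) 8 (by norm_num) (by norm_num) w4a
      (by unfold BlockEq; decide) (fun _ => h.sum_ne (by norm_num)) ih
  | four20 h ih =>
    exact glueSingle (by norm_num) 7 (by norm_num) (by norm_num) w4b
      (by unfold BlockEq; decide) (fun h0 => absurd rfl h0) ih
  | four13 h ih =>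
    exact glueSingle (by norm_num) 8 (by norm_num) (by norm_num) w4a
      (by unfold BlockEq; decide) (fun _ => h.sum_ne (by norm_num)) ih
  | four31 h ih =>
    exact glueSingle (by norm_num) 7 (by norm_num) (by norm_num) w4c
      (by unfold BlockEq; decide) (fun _ => h.sum_ne (by norm_num)) ih
  | unitA h ih =>
    exact glueDouble 15 (Or.inl rfl) w6 (by unfold BlockEq; decide)
      (fun h0 => absurd rfl h0) ih
  | unitB h ih =>
    exact glueDouble 16 (Or.inr rfl) w6 (by unfold BlockEq; decide)
      (fun _ => h.sum_ne (by norm_num)) ih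

lemma pathMain : ∀ (N : ℕ) (p : List ℕ), p.length ≤ N → (∀ x ∈ p, x = 2 ∨ x = 4) →
    (Odd (p.count 2) → ChainOK 1 p) ∧
    (Even (p.count 2) → 0 < p.count 2 → ChainOK 0 p ∧ ChainOK 2 p) ∧
    (p.count 2 = 0 → (Even p.length → ChainOK 0 p) ∧ (Odd p.length → ChainOK 2 p)) := by
  intro N
  induction N with
  | zero =>
    intro p hl _
    have hp : p = [] := List.eq_nil_of_length_eq_zero (by omega)
    subst hp
    refine ⟨?_, ?_, ?_⟩
    · intro hodd; simp at hodd
    · intro _ hpos; simp at hpos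
    · intro _
      constructor
      · intro _; exact ChainOK.nil
      · intro hodd; simp at hodd
  | succ N ih =>
    intro p hl h24
    match p with
    | [] =>
      refine ⟨?_, ?_, ?_⟩
      · intro hodd; simp at hodd
      · intro _ hpos; simp at hpos
      · intro _
        constructor
        · intro _; exact ChainOK.nil
        · intro hodd; simp at hodd
    | 2 :: q =>
      have hq24 : ∀ x ∈ q, x = 2 ∨ x = 4 := fun x hx => h24 x (List.mem_cons_of_mem _ hx)
      have hql : q.length ≤ N := by simpa using hl
      obtain ⟨ihq1, ihq2, ihq3⟩ := ih q hql hq24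
      have hc : (2 :: q).count 2 = q.count 2 + 1 := by simp
      have hlen : (2 :: q).length = q.length + 1 := rfl
      refine ⟨?_, ?_, ?_⟩
      · intro hodd
        rw [hc] at hodd
        have heq : Even (q.count 2) := by
          rcases Nat.even_or_odd (q.count 2) with he | ho
          · exact he
          · exfalso; rw [Nat.odd_iff] at hodd ho; omega
        by_cases h0 : q.count 2 = 0
        · rcases Nat.even_or_odd q.length with he | ho
          · exact ChainOK.two10 ((ihq3 h0).1 he)
          · exact ChainOK.two12 ((ihq3 h0).2 ho)
        · exact ChainOK.two10 ((ihq2 heq (by omega)).1)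
      · intro heven _
        rw [hc] at heven
        have hodd : Odd (q.count 2) := by
          rw [Nat.even_iff] at heven; rw [Nat.odd_iff]; omega
        exact ⟨ChainOK.two01 (ihq1 hodd), ChainOK.two21 (ihq1 hodd)⟩
      · intro h0
        rw [hc] at h0
        omega
    | 4 :: q =>
      have hq24 : ∀ x ∈ q, x = 2 ∨ x = 4 := fun x hx => h24 x (List.mem_cons_of_mem _ hx)
      have hql : q.length ≤ N := by simpa using hl
      obtain ⟨ihq1, ihq2, ihq3⟩ := ih q hql hq24
      have hc : (4 :: q).count 2 = q.count 2 := by simp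
      refine ⟨?_, ?_, ?_⟩
      · intro hodd
        rw [hc] at hodd
        match q with
        | [] => simp at hodd
        | 2 :: r =>
          have hr24 : ∀ x ∈ r, x = 2 ∨ x = 4 :=
            fun x hx => hq24 x (List.mem_cons_of_mem _ hx)
          have hrl : r.length ≤ N := by
            have := hql; simp at this ⊢; omega
          obtain ⟨ihr1, ihr2, ihr3⟩ := ih r hrl hr24
          have hcr : (2 :: r).count 2 = r.count 2 + 1 := by simp
          rw [hcr] at hodd
          have hre : Even (r.count 2) := by
            rcases Nat.even_or_odd (r.count 2) with he | ho
            · exact he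
            · exfalso; rw [Nat.odd_iff] at hodd ho; omega
          by_cases h0 : r.count 2 = 0
          · rcases Nat.even_or_odd r.length with he | ho
            · exact ChainOK.unitA ((ihr3 h0).1 he)
            · exact ChainOK.unitB ((ihr3 h0).2 ho)
          · exact ChainOK.unitA ((ihr2 hre (by omega)).1)
        | 4 :: r =>
          have hcr : (4 :: r).count 2 = r.count 2 := by simp
          rw [hcr] at hodd
          have hr24 : ∀ x ∈ r, x = 2 ∨ x = 4 :=
            fun x hx => hq24 x (List.mem_cons_of_mem _ hx)
          have hrl : r.length ≤ N := by
            have := hql; simp at this ⊢; omega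
          obtain ⟨ihr1, _, _⟩ := ih r hrl hr24
          exact ChainOK.four13 (ChainOK.four31 (ihr1 hodd))
        | (n + 5) :: r =>
          exfalso
          rcases hq24 (n + 5) (by simp) with h' | h' <;> omega
        | 0 :: r =>
          exfalso
          rcases hq24 0 (by simp) with h' | h' <;> omega
        | 1 :: r =>
          exfalso
          rcases hq24 1 (by simp) with h' | h' <;> omega
        | 3 :: r =>
          exfalso
          rcases hq24 3 (by simp) with h' | h' <;> omega
      · intro heven hpos
        rw [hc] at heven hpos
        obtain ⟨c0, c2⟩ := ihq2 heven hpos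
        exact ⟨ChainOK.four02 c2, ChainOK.four20 c0⟩
      · intro h0
        rw [hc] at h0
        have hlen : (4 :: q).length = q.length + 1 := rfl
        obtain ⟨e0, e2⟩ := ihq3 h0
        constructor
        · intro he
          rw [hlen] at he
          have : Odd q.length := by
            rw [Nat.even_iff] at he; rw [Nat.odd_iff]; omega
          exact ChainOK.four02 (e2 this)
        · intro ho
          rw [hlen] at ho
          have : Even q.length := by
            rw [Nat.odd_iff] at ho; rw [Nat.even_iff]; omega
          exact ChainOK.four20 (e0 this)
    | (n + 5) :: q =>
      exfalso
      rcases h24 (n + 5) (by simp) with h' | h' <;> omega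
    | 0 :: q =>
      exfalso
      rcases h24 0 (by simp) with h' | h' <;> omega
    | 1 :: q =>
      exfalso
      rcases h24 1 (by simp) with h' | h' <;> omega
    | 3 :: q =>
      exfalso
      rcases h24 3 (by simp) with h' | h' <;> omega

lemma aScore_zero_eq {M : ℕ} (u : Fin 3 → Equiv.Perm (Fin M)) (x : Fin M) :
    aScore 0 u x = (bordaScore u x : ℤ) := by
  unfold aScore bordaScore
  have e : (Finset.univ.filter (fun v : Fin 3 => v.val < 0 ∧ (u v x).val = 0)) = ∅ := by
    apply Finset.filter_false_of_mem
    intro v _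
    omega
  rw [e]
  push_cast
  simp

theorem mainResult (p : List ℕ) (h24 : ∀ x ∈ p, x = 2 ∨ x = 4)
    (heven : Even (p.count 2)) (hpos : 0 < p.count 2)
    (n : ℕ) (hn : Odd n) (hn3 : 3 ≤ n) :
    ∃ u : Fin n → (Fin p.sum ≃ Fin p.sum), ∃ scores : Fin p.length → ℕ,
      StrictMono scores ∧
      (∀ x, ∃ j, bordaScore u x = scores j) ∧
      ∀ j : Fin p.length,
        (Finset.univ.filter (fun x => bordaScore u x = scores j)).card = p.get j := by
  obtain ⟨c, hc⟩ : ∃ c, n = 3 + (c + c) := by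
    obtain ⟨k, hk⟩ := hn
    exact ⟨(n - 3) / 2, by omega⟩
  subst hc
  have hchain : ChainOK 0 p :=
    ((pathMain p.length p le_rfl h24).2.1 heven hpos).1
  obtain ⟨u₃, s, hmono, hbd, hcov, hcard⟩ := chainReal hchain
  have hx0 : True := trivial
  -- extended profile
  let F : Fin 3 ⊕ (Fin c ⊕ Fin c) → Equiv.Perm (Fin p.sum) :=
    Sum.elim u₃ (Sum.elim (fun _ => Equiv.refl _) (fun _ => Fin.revPerm))
  let e : (Fin 3 ⊕ (Fin c ⊕ Fin c)) ≃ Fin (3 + (c + c)) :=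
    (Equiv.sumCongr (Equiv.refl _) finSumFinEquiv).trans finSumFinEquiv
  let u : Fin (3 + (c + c)) → Equiv.Perm (Fin p.sum) := fun i => F (e.symm i)
  have hborda : ∀ x, bordaScore u x = bordaScore u₃ x + c * (p.sum + 1) := by
    intro x
    unfold bordaScore
    rw [← Equiv.sum_comp e (fun i => ((u i x : ℕ) + 1))]
    have he : ∀ y, u (e y) = F y := by
      intro y
      simp only [u, Equiv.symm_apply_apply]
    rw [Finset.sum_congr rfl (fun y _ => by rw [he y])]
    rw [Fintype.sum_sum_type, Fintype.sum_sum_type]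
    have h1 : ∀ z : Fin c, ((F (Sum.inr (Sum.inl z)) x : ℕ) + 1) = x.val + 1 := fun z => rfl
    have h2 : ∀ z : Fin c, ((F (Sum.inr (Sum.inr z)) x : ℕ) + 1) = (p.sum - (x.val + 1)) + 1 := by
      intro z
      rw [show F (Sum.inr (Sum.inr z)) = Fin.revPerm from rfl]
      rw [show (Fin.revPerm x : Fin p.sum) = Fin.rev x from rfl, Fin.val_rev]
    rw [Finset.sum_congr rfl (fun z _ => h1 z), Finset.sum_congr rfl (fun z _ => h2 z)]
    rw [Finset.sum_const, Finset.sum_const]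
    simp only [Finset.card_univ, Fintype.card_fin, smul_eq_mul]
    have hx : x.val < p.sum := x.isLt
    have hkey : (x.val + 1) + ((p.sum - (x.val + 1)) + 1) = p.sum + 1 := by omega
    rw [← Nat.left_distrib, hkey]
    rfl
  refine ⟨u, fun j => (s j).toNat + c * (p.sum + 1), ?_, ?_, ?_⟩
  · intro a b hab
    have h1 := hmono hab
    have h2 := (hbd a).1
    have h3 := (hbd b).1
    exact Nat.add_lt_add_right (by omega) _
  · intro x
    obtain ⟨j, hj⟩ := hcov x
    rw [aScore_zero_eq] at hj
    refine ⟨j, ?_⟩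
    rw [hborda x, Nat.add_right_cancel_iff]
    have := (hbd j).1
    omega
  · intro j
    have efil : (Finset.univ.filter
        (fun x : Fin p.sum => bordaScore u x = (s j).toNat + c * (p.sum + 1)))
        = (Finset.univ.filter (fun x : Fin p.sum => aScore 0 u₃ x = s j)) := by
      apply Finset.filter_congr
      intro x _
      rw [hborda x, Nat.add_right_cancel_iff, aScore_zero_eq]
      have := (hbd j).1
      constructor
      · intro hh; omega
      · intro hh; omega
    rw [efil]
    exact hcard j

theorem stmt14 (p : List ℕ) (h24 : ∀ x ∈ p, x = 2 ∨ x = 4)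
    (heven : Even (p.count 2)) (hpos : 0 < p.count 2)
    (n : ℕ) (hn : Odd n) (hn3 : 3 ≤ n) :
    InBordaRange n p :=
  mainResult p h24 heven hpos n hn hn3
end
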